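/- Weak duality for the third-order linear problem (PTL) and its dual (PTL*) (content of the linear duality Theorem in Section 5.1). Let A be a real n×n matrix, B a real n×r matrix, U ⊆ ℝ^r nonempty compact, f : ℝⁿ × ℝⁿ → ℝ, S ⊆ ℝⁿ × ℝⁿ, X(t) ⊆ ℝⁿ for t ∈ [0,T]. Let (x, u) be a feasible pair: u : [0,T] → ℝ^r measurable with u(t) ∈ U, x twice differentiable with x''(t) = x''(0) + ∫₀ᵗ v(s)ds on [0,T] for an integrable v with v(t) = A x(t) + B u(t) a.e., (x^{(j)}(0), x^{(j)}(T)) ∈ S for j = 0,1,2, and x(t) ∈ X(t) for all t. Let x* : ℝ → ℝⁿ be twice differentiable with x*''(t) = x*''(0) + ∫₀ᵗ w(s)ds on [0,T], w integrable; let μ* = (μ₀*, μ₁*) ∈ ℝⁿ × ℝⁿ; let c_U, ω : [0,T] → ℝ be integrable and c_f, c_S, c_S^0, c_S^1 ∈ ℝ satisfy: c_U(t) ≥ ⟨B u', x*(t)⟩ for all u' ∈ U, a.e. t; ω(t) ≥ ⟨ξ, w(t) + Aᵀ x*(t)⟩ for all ξ ∈ X(t), a.e. t; c_f ≥ ⟨y₀,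 x*''(0) + μ₀*⟩ + ⟨y₁, μ₁* − x*''(T)⟩ − f(y₀, y₁) for all y₀, y₁ ∈ ℝⁿ; c_S ≥ −⟨s₀, μ₀*⟩ − ⟨s₁, μ₁*⟩ for all (s₀,s₁) ∈ S; and c_S^j ≥ ⟨s₀, (−1)^j x*^{(j)}(0)⟩ + ⟨s₁, (−1)^{j+1} x*^{(j)}(T)⟩ for all (s₀,s₁) ∈ S, j = 0,1. Then f(x(0), x(T)) ≥ −c_f − ∫₀ᵀ c_U(t)dt − ∫₀ᵀ ω(t)dt − c_S − c_S^0 − c_S^1. -/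
import Mathlib


open MeasureTheory Matrix Set

/-- A feasible pair `(x, u)` (with `v = x'''`) for the third-order linear problem (PTL). -/
def IsFeasiblePTL (n r : ℕ) (T : ℝ)
    (A : Matrix (Fin n) (Fin n) ℝ) (B : Matrix (Fin n) (Fin r) ℝ)
    (U : Set (Fin r → ℝ))
    (S : Set ((Fin n → ℝ) × (Fin n → ℝ)))
    (X : ℝ → Set (Fin n → ℝ))
    (x : ℝ → (Fin n → ℝ)) (u : ℝ → (Fin r → ℝ)) (v : ℝ → (Fin n → ℝ)) : Prop :=
  Measurable u ∧ (∀ t ∈ Icc (0:ℝ) T, u t ∈ U) ∧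
  (∀ j < 2, Differentiable ℝ (iteratedDeriv j x)) ∧
  IntervalIntegrable v volume 0 T ∧
  (∀ t ∈ Icc (0:ℝ) T,
      iteratedDeriv 2 x t = iteratedDeriv 2 x 0 + ∫ s in (0:ℝ)..t, v s) ∧
  (∀ᵐ t ∂volume, t ∈ Icc (0:ℝ) T → v t = A *ᵥ x t + B *ᵥ u t) ∧
  (∀ j < 3, (iteratedDeriv j x 0, iteratedDeriv j x T) ∈ S) ∧
  (∀ t ∈ Icc (0:ℝ) T, x t ∈ X t)

section Helpers

variable {n : ℕ}

private lemma II_comp_proj {a b : ℝ} {g : ℝ → Fin n → ℝ}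
    (hg : IntervalIntegrable g volume a b) (i : Fin n) :
    IntervalIntegrable (fun t => g t i) volume a b :=
  ⟨(ContinuousLinearMap.proj (R := ℝ) (φ := fun _ : Fin n => ℝ) i).integrable_comp hg.1,
   (ContinuousLinearMap.proj (R := ℝ) (φ := fun _ : Fin n => ℝ) i).integrable_comp hg.2⟩

private lemma intervalIntegral_apply' {a b : ℝ} {g : ℝ → Fin n → ℝ}
    (hg : IntervalIntegrable g volume a b) (i : Fin n) :
    (∫ t in a..b, g t) i = ∫ t in a..b, g t i :=
  ((ContinuousLinearMap.proj (R := ℝ) (φ := fun _ : Fin n => ℝ) i).intervalIntegral_comp_comm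
    hg).symm

private lemma contOn_dot {s : Set ℝ} {f g : ℝ → Fin n → ℝ}
    (hf : ContinuousOn f s) (hg : ContinuousOn g s) :
    ContinuousOn (fun t => f t ⬝ᵥ g t) s := by
  rw [show (fun t => f t ⬝ᵥ g t) = fun t => ∑ i, f t i * g t i from rfl]
  exact continuousOn_finset_sum _ fun i _ =>
    ((continuous_apply i).comp_continuousOn hf).mul ((continuous_apply i).comp_continuousOn hg)

private lemma II_dot {a b : ℝ} {g φ : ℝ → Fin n → ℝ}
    (hg : IntervalIntegrable g volume a b) (hφ : ContinuousOn φ (Set.uIcc a b)) :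
    IntervalIntegrable (fun t => g t ⬝ᵥ φ t) volume a b := by
  rw [show (fun t => g t ⬝ᵥ φ t) = fun t => ∑ i, g t i * φ t i from rfl]
  have h : ∀ i : Fin n, IntervalIntegrable (fun t => g t i * φ t i) volume a b := fun i =>
    (II_comp_proj hg i).mul_continuousOn ((continuous_apply i).comp_continuousOn hφ)
  exact ⟨integrable_finset_sum _ fun i _ => (h i).1, integrable_finset_sum _ fun i _ => (h i).2⟩

private lemma fubini_parts {T : ℝ} (hT : 0 ≤ T) (g ψ : ℝ → ℝ)
    (hg : IntervalIntegrable g volume 0 T) (hψ : Continuous ψ) :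
    (∫ t in (0:ℝ)..T, (∫ s in (0:ℝ)..t, g s) * ψ t)
      = ∫ s in (0:ℝ)..T, g s * ∫ t in s..T, ψ t := by
  have hgI : Integrable g (volume.restrict (Ioc (0:ℝ) T)) := hg.1
  have hψI : Integrable ψ (volume.restrict (Ioc (0:ℝ) T)) := hψ.integrableOn_Ioc
  have hmeas : MeasurableSet {p : ℝ × ℝ | p.2 ≤ p.1} :=
    measurableSet_le measurable_snd measurable_fst
  have hint : Integrable (Function.uncurry fun t s =>
      ({p : ℝ × ℝ | p.2 ≤ p.1}.indicator (fun p => ψ p.1 * g p.2)) (t, s))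
      ((volume.restrict (Ioc (0:ℝ) T)).prod (volume.restrict (Ioc (0:ℝ) T))) := by
    have heq : (Function.uncurry fun t s =>
        ({p : ℝ × ℝ | p.2 ≤ p.1}.indicator (fun p => ψ p.1 * g p.2)) (t, s))
        = {p : ℝ × ℝ | p.2 ≤ p.1}.indicator (fun p => ψ p.1 * g p.2) := rfl
    rw [heq]
    exact (hψI.mul_prod hgI).indicator hmeas
  have swap := MeasureTheory.integral_integral_swap hint
  have hL : (∫ t, ∫ s, ({p : ℝ × ℝ | p.2 ≤ p.1}.indicator (fun p => ψ p.1 * g p.2)) (t, s)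
        ∂(volume.restrict (Ioc (0:ℝ) T)) ∂(volume.restrict (Ioc (0:ℝ) T)))
      = ∫ t in (0:ℝ)..T, (∫ s in (0:ℝ)..t, g s) * ψ t := by
    rw [intervalIntegral.integral_of_le hT]
    refine setIntegral_congr_fun measurableSet_Ioc fun t ht => ?_
    have h1 : (fun s => ({p : ℝ × ℝ | p.2 ≤ p.1}.indicator (fun p => ψ p.1 * g p.2)) (t, s))
        = (Iic t).indicator (fun s => ψ t * g s) := by
      funext s
      by_cases h : s ≤ t <;> simp [Set.indicator_apply, h]
    rw [h1, setIntegral_indicator measurableSet_Iic]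
    have h2 : Ioc (0:ℝ) T ∩ Iic t = Ioc 0 t := by
      ext s
      simp only [mem_inter_iff, mem_Ioc, mem_Iic]
      exact ⟨fun h => ⟨h.1.1, h.2⟩, fun h => ⟨⟨h.1, h.2.trans ht.2⟩, h.2⟩⟩
    rw [h2, MeasureTheory.integral_const_mul, ← intervalIntegral.integral_of_le ht.1.le]
    exact mul_comm _ _
  have hR : (∫ s, ∫ t, ({p : ℝ × ℝ | p.2 ≤ p.1}.indicator (fun p => ψ p.1 * g p.2)) (t, s)
        ∂(volume.restrict (Ioc (0:ℝ) T)) ∂(volume.restrict (Ioc (0:ℝ) T)))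
      = ∫ s in (0:ℝ)..T, g s * ∫ t in s..T, ψ t := by
    rw [intervalIntegral.integral_of_le hT]
    refine setIntegral_congr_fun measurableSet_Ioc fun s hs => ?_
    have h1 : (fun t => ({p : ℝ × ℝ | p.2 ≤ p.1}.indicator (fun p => ψ p.1 * g p.2)) (t, s))
        = (Ici s).indicator (fun t => ψ t * g s) := by
      funext t
      by_cases h : s ≤ t <;> simp [Set.indicator_apply, h]
    rw [h1, setIntegral_indicator measurableSet_Ici]
    have h2 : Ioc (0:ℝ) T ∩ Ici s = Icc s T := by
      ext t
      simp only [mem_inter_iff, mem_Ioc, mem_Icc, mem_Ici]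
      exact ⟨fun h => ⟨h.2, h.1.2⟩, fun h => ⟨⟨lt_of_lt_of_le hs.1 h.1, h.2⟩, h.1⟩⟩
    rw [h2, MeasureTheory.integral_Icc_eq_integral_Ioc, MeasureTheory.integral_mul_const,
      ← intervalIntegral.integral_of_le hs.2]
    exact mul_comm _ _
  rw [← hL, swap, hR]

private lemma parts_prim {T : ℝ} (hT : 0 ≤ T) (c : ℝ) (g φ ψ : ℝ → ℝ)
    (hg : IntervalIntegrable g volume 0 T)
    (hφ : ∀ t, HasDerivAt φ (ψ t) t) (hψ : Continuous ψ) :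
    ∫ t in (0:ℝ)..T, g t * φ t
      = (c + ∫ s in (0:ℝ)..T, g s) * φ T - c * φ 0
        - ∫ t in (0:ℝ)..T, (c + ∫ s in (0:ℝ)..t, g s) * ψ t := by
  have hφd : Differentiable ℝ φ := fun t => (hφ t).differentiableAt
  have hφc : Continuous φ := hφd.continuous
  have hFTC : ∀ s : ℝ, (∫ t in s..T, ψ t) = φ T - φ s := fun s =>
    intervalIntegral.integral_eq_sub_of_hasDerivAt (fun t _ => hφ t) (hψ.intervalIntegrable s T)
  have key := fubini_parts hT g ψ hg hψ
  simp only [hFTC] at key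
  have exp2 : (∫ s in (0:ℝ)..T, g s * (φ T - φ s))
      = (∫ s in (0:ℝ)..T, g s) * φ T - ∫ s in (0:ℝ)..T, g s * φ s := by
    simp only [mul_sub]
    rw [intervalIntegral.integral_sub (hg.mul_const _) (hg.mul_continuousOn hφc.continuousOn),
      intervalIntegral.integral_mul_const]
  have hP : ContinuousOn (fun t => ∫ s in (0:ℝ)..t, g s) (Set.uIcc (0:ℝ) T) :=
    intervalIntegral.continuousOn_primitive_interval
      (by rw [uIcc_of_le hT]; exact (intervalIntegrable_iff_integrableOn_Icc_of_le hT).1 hg)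
  have hcψ : IntervalIntegrable (fun t => c * ψ t) volume 0 T :=
    (continuous_const.mul hψ).intervalIntegrable _ _
  have hPψ' : IntervalIntegrable (fun t => (∫ s in (0:ℝ)..t, g s) * ψ t) volume 0 T :=
    (hP.mul hψ.continuousOn).intervalIntegrable
  have exp1 : (∫ t in (0:ℝ)..T, (c + ∫ s in (0:ℝ)..t, g s) * ψ t)
      = c * (φ T - φ 0) + ∫ t in (0:ℝ)..T, (∫ s in (0:ℝ)..t, g s) * ψ t := by
    simp only [add_mul]
    rw [intervalIntegral.integral_add hcψ hPψ', intervalIntegral.integral_const_mul, hFTC 0]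
  rw [exp1, key, exp2]
  ring

private lemma parts_prim_vec {T : ℝ} (hT : 0 ≤ T) (c : Fin n → ℝ)
    {g G φ ψ : ℝ → Fin n → ℝ}
    (hg : IntervalIntegrable g volume 0 T)
    (hG : ∀ t ∈ Icc (0:ℝ) T, G t = c + ∫ s in (0:ℝ)..t, g s)
    (hφ : ∀ t, HasDerivAt φ (ψ t) t) (hψ : Continuous ψ) :
    ∫ t in (0:ℝ)..T, g t ⬝ᵥ φ t
      = G T ⬝ᵥ φ T - G 0 ⬝ᵥ φ 0 - ∫ t in (0:ℝ)..T, G t ⬝ᵥ ψ t := by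
  have hφd : Differentiable ℝ φ := fun t => (hφ t).differentiableAt
  have hφc : Continuous φ := hφd.continuous
  have hGi : ∀ (i : Fin n), ∀ t ∈ Icc (0:ℝ) T, G t i = c i + ∫ s in (0:ℝ)..t, g s i := by
    intro i t ht
    have hsub : IntervalIntegrable g volume 0 t :=
      hg.mono_set (by rw [uIcc_of_le ht.1, uIcc_of_le hT]; exact Icc_subset_Icc le_rfl ht.2)
    rw [hG t ht]
    simp only [Pi.add_apply]
    rw [intervalIntegral_apply' hsub i]
  have hGcont : ∀ i : Fin n, ContinuousOn (fun t => G t i) (Set.uIcc (0:ℝ) T) := by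
    intro i
    have h1 : ContinuousOn (fun t => c i + ∫ s in (0:ℝ)..t, g s i) (Set.uIcc (0:ℝ) T) :=
      continuousOn_const.add (intervalIntegral.continuousOn_primitive_interval
        (by rw [uIcc_of_le hT]
            exact (intervalIntegrable_iff_integrableOn_Icc_of_le hT).1 (II_comp_proj hg i)))
    exact h1.congr fun t ht => hGi i t (by rwa [uIcc_of_le hT] at ht)
  have coord : ∀ i : Fin n, ∫ t in (0:ℝ)..T, g t i * φ t i
      = G T i * φ T i - G 0 i * φ 0 i - ∫ t in (0:ℝ)..T, G t i * ψ t i := by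
    intro i
    have h := parts_prim hT (c i) (fun t => g t i) (fun t => φ t i) (fun t => ψ t i)
      (II_comp_proj hg i) (fun t => hasDerivAt_pi.1 (hφ t) i) ((continuous_apply i).comp hψ)
    have e1 : (∫ t in (0:ℝ)..T, (c i + ∫ s in (0:ℝ)..t, g s i) * ψ t i)
        = ∫ t in (0:ℝ)..T, G t i * ψ t i :=
      intervalIntegral.integral_congr fun t ht => by
        rw [hGi i t (by rwa [uIcc_of_le hT] at ht)]
    have e2 : c i + ∫ s in (0:ℝ)..T, g s i = G T i := (hGi i T (right_mem_Icc.2 hT)).symm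
    have e3 : G 0 i = c i := by
      rw [hGi i 0 (left_mem_Icc.2 hT)]; simp
    rw [h, e1, e2, ← e3]
  have hsum1 : (∫ t in (0:ℝ)..T, g t ⬝ᵥ φ t) = ∑ i, ∫ t in (0:ℝ)..T, g t i * φ t i := by
    rw [show (fun t => g t ⬝ᵥ φ t) = fun t => ∑ i, g t i * φ t i from rfl]
    exact intervalIntegral.integral_finset_sum fun i _ =>
      (II_comp_proj hg i).mul_continuousOn ((continuous_apply i).comp hφc).continuousOn
  have hsum2 : (∫ t in (0:ℝ)..T, G t ⬝ᵥ ψ t) = ∑ i, ∫ t in (0:ℝ)..T, G t i * ψ t i := by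
    rw [show (fun t => G t ⬝ᵥ ψ t) = fun t => ∑ i, G t i * ψ t i from rfl]
    exact intervalIntegral.integral_finset_sum fun i _ =>
      ((hGcont i).mul ((continuous_apply i).comp hψ).continuousOn).intervalIntegrable
  rw [hsum1, hsum2]
  calc (∑ i, ∫ t in (0:ℝ)..T, g t i * φ t i)
      = ∑ i, (G T i * φ T i - G 0 i * φ 0 i - ∫ t in (0:ℝ)..T, G t i * ψ t i) :=
        Finset.sum_congr rfl fun i _ => coord i
    _ = G T ⬝ᵥ φ T - G 0 ⬝ᵥ φ 0 - ∑ i, ∫ t in (0:ℝ)..T, G t i * ψ t i := by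
        rw [Finset.sum_sub_distrib, Finset.sum_sub_distrib]; rfl

private lemma parts_vec {T : ℝ} (hT : 0 ≤ T)
    (φ₁ ψ₁ φ₂ ψ₂ : ℝ → Fin n → ℝ)
    (h₁ : ∀ t, HasDerivAt φ₁ (ψ₁ t) t) (h₂ : ∀ t, HasDerivAt φ₂ (ψ₂ t) t)
    (hc₁ : ContinuousOn ψ₁ (Set.uIcc (0:ℝ) T)) (hc₂ : ContinuousOn ψ₂ (Set.uIcc (0:ℝ) T)) :
    ∫ t in (0:ℝ)..T, (ψ₁ t ⬝ᵥ φ₂ t + φ₁ t ⬝ᵥ ψ₂ t) = φ₁ T ⬝ᵥ φ₂ T - φ₁ 0 ⬝ᵥ φ₂ 0 := by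
  have hφ₁d : Differentiable ℝ φ₁ := fun t => (h₁ t).differentiableAt
  have hφ₁c : Continuous φ₁ := hφ₁d.continuous
  have hφ₂d : Differentiable ℝ φ₂ := fun t => (h₂ t).differentiableAt
  have hφ₂c : Continuous φ₂ := hφ₂d.continuous
  have coord : ∀ i : Fin n, (∫ t in (0:ℝ)..T, (ψ₁ t i * φ₂ t i + φ₁ t i * ψ₂ t i))
      = φ₁ T i * φ₂ T i - φ₁ 0 i * φ₂ 0 i := fun i =>
    intervalIntegral.integral_deriv_mul_eq_sub_of_hasDerivAt
      ((continuous_apply i).comp hφ₁c).continuousOn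
      ((continuous_apply i).comp hφ₂c).continuousOn
      (fun t _ => hasDerivAt_pi.1 (h₁ t) i) (fun t _ => hasDerivAt_pi.1 (h₂ t) i)
      ((continuous_apply i).comp_continuousOn hc₁).intervalIntegrable
      ((continuous_apply i).comp_continuousOn hc₂).intervalIntegrable
  have hint : ∀ i : Fin n,
      IntervalIntegrable (fun t => ψ₁ t i * φ₂ t i + φ₁ t i * ψ₂ t i) volume 0 T :=
    fun i => (((continuous_apply i).comp_continuousOn hc₁).mul
        ((continuous_apply i).comp hφ₂c).continuousOn).intervalIntegrable.add
      ((((continuous_apply i).comp hφ₁c).continuousOn.mul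
        ((continuous_apply i).comp_continuousOn hc₂)).intervalIntegrable)
  rw [show (fun t => ψ₁ t ⬝ᵥ φ₂ t + φ₁ t ⬝ᵥ ψ₂ t)
      = fun t => ∑ i, (ψ₁ t i * φ₂ t i + φ₁ t i * ψ₂ t i) from
    funext fun t => (Finset.sum_add_distrib).symm]
  rw [intervalIntegral.integral_finset_sum fun i _ => hint i]
  calc (∑ i, ∫ t in (0:ℝ)..T, (ψ₁ t i * φ₂ t i + φ₁ t i * ψ₂ t i))
      = ∑ i, (φ₁ T i * φ₂ T i - φ₁ 0 i * φ₂ 0 i) := Finset.sum_congr rfl fun i _ => coord i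
    _ = φ₁ T ⬝ᵥ φ₂ T - φ₁ 0 ⬝ᵥ φ₂ 0 := by rw [Finset.sum_sub_distrib]; rfl
end Helpers

/-- Weak duality between the third-order linear problem (PTL) and its dual (PTL*). -/
theorem weak_duality_PTL
    (n r : ℕ) (hn : 1 ≤ n) (hr : 1 ≤ r) (T : ℝ) (hT : 0 < T)
    (A : Matrix (Fin n) (Fin n) ℝ) (B : Matrix (Fin n) (Fin r) ℝ)
    (U : Set (Fin r → ℝ)) (hUne : U.Nonempty) (hUcomp : IsCompact U)
    (S : Set ((Fin n → ℝ) × (Fin n → ℝ)))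
    (X : ℝ → Set (Fin n → ℝ))
    (f : (Fin n → ℝ) → (Fin n → ℝ) → ℝ)
    (x : ℝ → (Fin n → ℝ)) (u : ℝ → (Fin r → ℝ)) (v : ℝ → (Fin n → ℝ))
    (hfeas : IsFeasiblePTL n r T A B U S X x u v)
    -- the dual arc x* (twice differentiable, x*''' represented by w)
    (xs w : ℝ → (Fin n → ℝ))
    (hxsdiff : ∀ j < 2, Differentiable ℝ (iteratedDeriv j xs))
    (hw : IntervalIntegrable w volume 0 T)
    (hxs : ∀ t ∈ Icc (0:ℝ) T,
      iteratedDeriv 2 xs t = iteratedDeriv 2 xs 0 + ∫ s in (0:ℝ)..t, w s)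
    (μ₀ μ₁ : Fin n → ℝ)
    (cU ω : ℝ → ℝ)
    (hcUint : IntervalIntegrable cU volume 0 T)
    (hωint : IntervalIntegrable ω volume 0 T)
    (cf cS cS0 cS1 : ℝ)
    (hcU : ∀ᵐ t ∂volume, t ∈ Icc (0:ℝ) T → ∀ u' ∈ U, (B *ᵥ u') ⬝ᵥ xs t ≤ cU t)
    (hω : ∀ᵐ t ∂volume, t ∈ Icc (0:ℝ) T → ∀ ξ ∈ X t, ξ ⬝ᵥ (w t + Aᵀ *ᵥ xs t) ≤ ω t)
    (hcf : ∀ y₀ y₁ : Fin n → ℝ,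
      y₀ ⬝ᵥ (iteratedDeriv 2 xs 0 + μ₀) + y₁ ⬝ᵥ (μ₁ - iteratedDeriv 2 xs T)
        - f y₀ y₁ ≤ cf)
    (hcS : ∀ s ∈ S, -(s.1 ⬝ᵥ μ₀) - s.2 ⬝ᵥ μ₁ ≤ cS)
    (hcS0 : ∀ s ∈ S, s.1 ⬝ᵥ ((-1:ℝ)^(0:ℕ) • iteratedDeriv 0 xs 0)
        + s.2 ⬝ᵥ ((-1:ℝ)^(1:ℕ) • iteratedDeriv 0 xs T) ≤ cS0)
    (hcS1 : ∀ s ∈ S, s.1 ⬝ᵥ ((-1:ℝ)^(1:ℕ) • iteratedDeriv 1 xs 0)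
        + s.2 ⬝ᵥ ((-1:ℝ)^(2:ℕ) • iteratedDeriv 1 xs T) ≤ cS1) :
    -cf - (∫ t in (0:ℝ)..T, cU t) - (∫ t in (0:ℝ)..T, ω t) - cS - cS0 - cS1
      ≤ f (x 0) (x T) := by
  obtain ⟨humeas, huU, hxdiff, hv, hx2, hvae, hS, hX⟩ := hfeas
  -- differentiability facts for x
  have hxd : Differentiable ℝ x := by
    have := hxdiff 0 (by norm_num); rwa [iteratedDeriv_zero] at this
  have hx1d : Differentiable ℝ (iteratedDeriv 1 x) := hxdiff 1 (by norm_num)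
  have hx01 : ∀ t, HasDerivAt x (iteratedDeriv 1 x t) t := fun t => by
    rw [iteratedDeriv_one]; exact (hxd t).hasDerivAt
  have h21x : iteratedDeriv 2 x = deriv (iteratedDeriv 1 x) := by
    rw [show (2:ℕ) = 1+1 from rfl, iteratedDeriv_succ]
  have hx12 : ∀ t, HasDerivAt (iteratedDeriv 1 x) (iteratedDeriv 2 x t) t := fun t => by
    rw [h21x]; exact (hx1d t).hasDerivAt
  -- differentiability facts for xs
  have hxsd : Differentiable ℝ xs := by
    have := hxsdiff 0 (by norm_num); rwa [iteratedDeriv_zero] at this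
  have hxs1d : Differentiable ℝ (iteratedDeriv 1 xs) := hxsdiff 1 (by norm_num)
  have hxs01 : ∀ t, HasDerivAt xs (iteratedDeriv 1 xs t) t := fun t => by
    rw [iteratedDeriv_one]; exact (hxsd t).hasDerivAt
  have h21xs : iteratedDeriv 2 xs = deriv (iteratedDeriv 1 xs) := by
    rw [show (2:ℕ) = 1+1 from rfl, iteratedDeriv_succ]
  have hxs12 : ∀ t, HasDerivAt (iteratedDeriv 1 xs) (iteratedDeriv 2 xs t) t := fun t => by
    rw [h21xs]; exact (hxs1d t).hasDerivAt
  -- continuity of second derivatives on [0, T]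
  have hx2cont : ContinuousOn (iteratedDeriv 2 x) (Set.uIcc (0:ℝ) T) := by
    have hprim : ContinuousOn (fun t => iteratedDeriv 2 x 0 + ∫ s in (0:ℝ)..t, v s)
        (Set.uIcc (0:ℝ) T) :=
      continuousOn_const.add (intervalIntegral.continuousOn_primitive_interval
        (by rw [uIcc_of_le hT.le]
            exact (intervalIntegrable_iff_integrableOn_Icc_of_le hT.le).1 hv))
    exact hprim.congr fun t ht => hx2 t (by rwa [uIcc_of_le hT.le] at ht)
  have hxs2cont : ContinuousOn (iteratedDeriv 2 xs) (Set.uIcc (0:ℝ) T) := by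
    have hprim : ContinuousOn (fun t => iteratedDeriv 2 xs 0 + ∫ s in (0:ℝ)..t, w s)
        (Set.uIcc (0:ℝ) T) :=
      continuousOn_const.add (intervalIntegral.continuousOn_primitive_interval
        (by rw [uIcc_of_le hT.le]
            exact (intervalIntegrable_iff_integrableOn_Icc_of_le hT.le).1 hw))
    exact hprim.congr fun t ht => hxs t (by rwa [uIcc_of_le hT.le] at ht)
  -- the three integration-by-parts identities
  have h1 := parts_prim_vec hT.le (iteratedDeriv 2 x 0) hv hx2 hxs01 hxs1d.continuous
  have h3 := parts_prim_vec hT.le (iteratedDeriv 2 xs 0) hw hxs hx01 hx1d.continuous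
  have h2 := parts_vec hT.le (iteratedDeriv 1 x) (iteratedDeriv 2 x)
    (iteratedDeriv 1 xs) (iteratedDeriv 2 xs) hx12 hxs12 hx2cont hxs2cont
  -- split the middle integral
  have hIIa : IntervalIntegrable (fun t => iteratedDeriv 2 x t ⬝ᵥ iteratedDeriv 1 xs t)
      volume 0 T := (contOn_dot hx2cont hxs1d.continuous.continuousOn).intervalIntegrable
  have hIIb : IntervalIntegrable (fun t => iteratedDeriv 1 x t ⬝ᵥ iteratedDeriv 2 xs t)
      volume 0 T := (contOn_dot hx1d.continuous.continuousOn hxs2cont).intervalIntegrable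
  have h2' : (∫ t in (0:ℝ)..T, iteratedDeriv 2 x t ⬝ᵥ iteratedDeriv 1 xs t)
      + (∫ t in (0:ℝ)..T, iteratedDeriv 1 x t ⬝ᵥ iteratedDeriv 2 xs t)
      = iteratedDeriv 1 x T ⬝ᵥ iteratedDeriv 1 xs T
        - iteratedDeriv 1 x 0 ⬝ᵥ iteratedDeriv 1 xs 0 := by
    rw [← intervalIntegral.integral_add hIIa hIIb]; exact h2
  -- comm identity to match h3 with h2'
  have hcomm : (∫ t in (0:ℝ)..T, iteratedDeriv 2 xs t ⬝ᵥ iteratedDeriv 1 x t)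
      = ∫ t in (0:ℝ)..T, iteratedDeriv 1 x t ⬝ᵥ iteratedDeriv 2 xs t :=
    intervalIntegral.integral_congr fun t _ => dotProduct_comm _ _
  -- the a.e. bound
  have hII_vxs : IntervalIntegrable (fun t => v t ⬝ᵥ xs t) volume 0 T :=
    II_dot hv hxsd.continuous.continuousOn
  have hII_wx : IntervalIntegrable (fun t => w t ⬝ᵥ x t) volume 0 T :=
    II_dot hw hxd.continuous.continuousOn
  have hmain : (fun t => v t ⬝ᵥ xs t + w t ⬝ᵥ x t)
      ≤ᵐ[volume.restrict (Icc (0:ℝ) T)] fun t => cU t + ω t := by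
    have hXae : ∀ᵐ t ∂(volume.restrict (Icc (0:ℝ) T)), t ∈ Icc (0:ℝ) T :=
      ae_restrict_mem measurableSet_Icc
    have h1ae := (ae_restrict_iff' measurableSet_Icc).2 hvae
    have h2ae := (ae_restrict_iff' measurableSet_Icc).2 hcU
    have h3ae := (ae_restrict_iff' measurableSet_Icc).2 hω
    filter_upwards [hXae, h1ae, h2ae, h3ae] with t ht hv' hcU' hω'
    have e : v t ⬝ᵥ xs t = (B *ᵥ u t) ⬝ᵥ xs t + x t ⬝ᵥ (Aᵀ *ᵥ xs t) := by
      rw [hv', add_dotProduct]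
      rw [add_comm]
      congr 1
      calc (A *ᵥ x t) ⬝ᵥ xs t = xs t ⬝ᵥ (A *ᵥ x t) := dotProduct_comm _ _
        _ = (xs t ᵥ* A) ⬝ᵥ x t := Matrix.dotProduct_mulVec _ _ _
        _ = x t ⬝ᵥ (xs t ᵥ* A) := dotProduct_comm _ _
        _ = x t ⬝ᵥ (Aᵀ *ᵥ xs t) := by rw [Matrix.mulVec_transpose]
    have hut : (B *ᵥ u t) ⬝ᵥ xs t ≤ cU t := hcU' (u t) (huU t ht)
    have hxt : x t ⬝ᵥ (w t + Aᵀ *ᵥ xs t) ≤ ω t := hω' (x t) (hX t ht)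
    have hexp : x t ⬝ᵥ (w t + Aᵀ *ᵥ xs t) = x t ⬝ᵥ w t + x t ⬝ᵥ (Aᵀ *ᵥ xs t) :=
      dotProduct_add _ _ _
    have hwc : w t ⬝ᵥ x t = x t ⬝ᵥ w t := dotProduct_comm _ _
    show v t ⬝ᵥ xs t + w t ⬝ᵥ x t ≤ cU t + ω t
    linarith
  have hmono := intervalIntegral.integral_mono_ae_restrict hT.le (hII_vxs.add hII_wx)
    (hcUint.add hωint) hmain
  have hsplitL := intervalIntegral.integral_add hII_vxs hII_wx
  have hsplitR := intervalIntegral.integral_add hcUint hωint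
  -- endpoint conditions
  have hS0 : (x 0, x T) ∈ S := by
    have := hS 0 (by norm_num); rwa [iteratedDeriv_zero] at this
  have hS1 : (iteratedDeriv 1 x 0, iteratedDeriv 1 x T) ∈ S := hS 1 (by norm_num)
  have hS2 : (iteratedDeriv 2 x 0, iteratedDeriv 2 x T) ∈ S := hS 2 (by norm_num)
  have hA := hcS0 _ hS2
  simp only [pow_zero, pow_one, one_smul, neg_smul, dotProduct_neg,
    iteratedDeriv_zero] at hA
  have hB := hcS1 _ hS1
  simp only [pow_one, neg_one_sq, neg_smul, one_smul, dotProduct_neg] at hB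
  have hC := hcS _ hS0
  simp only at hC
  have hD := hcf (x 0) (x T)
  rw [dotProduct_add, dotProduct_sub] at hD
  -- comm identities to match atoms
  have e1 : iteratedDeriv 2 xs T ⬝ᵥ x T = x T ⬝ᵥ iteratedDeriv 2 xs T :=
    dotProduct_comm _ _
  have e2 : iteratedDeriv 2 xs 0 ⬝ᵥ x 0 = x 0 ⬝ᵥ iteratedDeriv 2 xs 0 :=
    dotProduct_comm _ _
  rw [hcomm] at h3
  linarith [hmono, hsplitL, hsplitR, h1, h2', h3, hA, hB, hC, hD, e1, e2]
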